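/- Let H be symmetric, g ∈ ℝ^d, L > 0, and suppose λ* ≥ 0, h* satisfy H + λ*I ⪰ 0, (H + λ*I)h* = −g, ‖h*‖ = 2λ*/L. Then for every λ > max{λ*, −λ_min(H)} one has L·‖(H + λI)^{-1}g‖ < 2λ. -/

import Mathlib

open Matrix RealInnerProductSpace

noncomputable section

abbrev E (d : ℕ) := EuclideanSpace ℝ (Fin d)

/-- The cubic regularization model `m(h) = ⟨g,h⟩ + ½ hᵀHh + (L/6)‖h‖³`. -/
def cubicModel {d : ℕ} (g : E d) (H : Matrix (Fin d) (Fin d) ℝ) (L : ℝ) (h : E d) : ℝ :=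
  ⟪g, h⟫ + (1/2) * ⟪(Matrix.toEuclideanLin H) h, h⟫ + (L/6) * ‖h‖^3

/-- The minimum eigenvalue of a symmetric matrix, as the infimum of the Rayleigh quotient
over unit vectors. -/
def lamMin {d : ℕ} (H : Matrix (Fin d) (Fin d) ℝ) : ℝ :=
  sInf {r : ℝ | ∃ v : E d, ‖v‖ = 1 ∧ ⟪(Matrix.toEuclideanLin H) v, v⟫ = r}

/-- The minimum eigenvalue of the Hessian `∇²f(x)` of `f` at `x`, as the infimum of
its Rayleigh quotient over unit vectors. -/
def hessLamMin {d : ℕ} (f : E d → ℝ) (x : E d) : ℝ :=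
  sInf {r : ℝ | ∃ v : E d, ‖v‖ = 1 ∧ ⟪fderiv ℝ (gradient f) x v, v⟫ = r}

lemma toEuclideanLin_mul_apply {d : ℕ} (P Q : Matrix (Fin d) (Fin d) ℝ) (v : E d) :
    Matrix.toEuclideanLin (P * Q) v = Matrix.toEuclideanLin P (Matrix.toEuclideanLin Q v) := by
  simp [Matrix.toEuclideanLin_apply, Matrix.mulVec_mulVec]

lemma inner_toEuclideanLin {d : ℕ} (P : Matrix (Fin d) (Fin d) ℝ) (v : E d) :
    ⟪Matrix.toEuclideanLin P v, v⟫ =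
      dotProduct (star ((WithLp.equiv 2 (Fin d → ℝ)) v)) (P *ᵥ (WithLp.equiv 2 (Fin d → ℝ)) v) := by
  simp [Matrix.toEuclideanLin_apply, PiLp.inner_apply, dotProduct, mul_comm]

theorem stmt_9 {d : ℕ} (g : E d) (H : Matrix (Fin d) (Fin d) ℝ) (hH : H.IsSymm)
    (L : ℝ) (hL : 0 < L) (lam : ℝ) (hlam : 0 ≤ lam) (hstar : E d)
    (hpsd : (H + lam • 1).PosSemidef)
    (heq : (Matrix.toEuclideanLin (H + lam • 1)) hstar = -g)
    (hnorm : ‖hstar‖ = 2 * lam / L) :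
    ∀ lam' : ℝ, max lam (-(lamMin H)) < lam' →
      L * ‖(Matrix.toEuclideanLin ((H + lam' • 1)⁻¹)) g‖ < 2 * lam' := by
  intro lam' hlt
  set A : Matrix (Fin d) (Fin d) ℝ := H + lam • 1 with hA
  set M : Matrix (Fin d) (Fin d) ℝ := H + lam' • 1 with hM
  set c : ℝ := lam' - lam with hc
  have hcpos : 0 < c :=
    sub_pos.mpr (lt_of_le_of_lt (le_max_left _ _) hlt)
  have hMA : M = A + c • 1 := by
    simp only [hA, hM, hc, sub_smul]
    abel
  -- A is PSD as an operator
  have hApsd : ∀ v : E d, 0 ≤ ⟪Matrix.toEuclideanLin A v, v⟫ := by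
    intro v
    rw [inner_toEuclideanLin]
    exact hpsd.dotProduct_mulVec_nonneg _
  -- M is positive definite
  have hMpd : M.PosDef := by
    rw [Matrix.posDef_iff_dotProduct_mulVec]
    constructor
    · have h1 : (c • (1 : Matrix (Fin d) (Fin d) ℝ)).IsHermitian :=
        by simp [Matrix.IsHermitian]
      rw [hMA]; exact hpsd.1.add h1
    · intro x hx
      have h1 : 0 ≤ dotProduct (star x) (A *ᵥ x) := hpsd.dotProduct_mulVec_nonneg x
      have h2 : dotProduct (star x) ((c • (1 : Matrix (Fin d) (Fin d) ℝ)) *ᵥ x)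
          = c * dotProduct (star x) x := by
        simp [Matrix.smul_mulVec, Matrix.one_mulVec, dotProduct_smul]
      have h3 : 0 < dotProduct (star x) x := by
        have := dotProduct_star_self_pos_iff (v := x) |>.mpr hx
        simpa using this
      rw [hMA, Matrix.add_mulVec, dotProduct_add, h2]
      nlinarith
  have hdet : IsUnit M.det := (Matrix.isUnit_iff_isUnit_det M).mp hMpd.isUnit
  have hMMinv : M * M⁻¹ = 1 := Matrix.mul_nonsing_inv M hdet
  have hMinvM : M⁻¹ * M = 1 := Matrix.nonsing_inv_mul M hdet
  -- A and M⁻¹ commute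
  have hAMcomm : M * A = A * M := by
    rw [hMA]
    simp [add_mul, mul_add, Matrix.smul_mul, Matrix.mul_smul]
  have hcomm : M⁻¹ * A = A * M⁻¹ := by
    have h1 : M⁻¹ * (M * A) * M⁻¹ = A * M⁻¹ := by
      rw [← mul_assoc M⁻¹ M A, hMinvM, one_mul]
    have h2 : M⁻¹ * (A * M) * M⁻¹ = M⁻¹ * A := by
      rw [← mul_assoc M⁻¹ A M, mul_assoc (M⁻¹ * A) M M⁻¹, hMMinv, mul_one]
    rw [← h2, ← hAMcomm, h1]
  set w : E d := Matrix.toEuclideanLin M⁻¹ hstar with hw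
  have hMw : Matrix.toEuclideanLin M w = hstar := by
    rw [hw, ← toEuclideanLin_mul_apply, hMMinv]
    simp [Matrix.toEuclideanLin_apply]
  -- the vector in question equals -(A w)
  have hu : Matrix.toEuclideanLin M⁻¹ g = -(Matrix.toEuclideanLin A w) := by
    have : g = -(Matrix.toEuclideanLin A hstar) := by rw [heq, neg_neg]
    rw [this, map_neg, ← toEuclideanLin_mul_apply, hcomm, toEuclideanLin_mul_apply]
  -- norm bound : ‖A w‖ ≤ ‖M w‖
  set a : E d := Matrix.toEuclideanLin A w with ha
  have hMweq : Matrix.toEuclideanLin M w = a + c • w := by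
    rw [hMA, map_add, ha]
    congr 1
    simp [Matrix.toEuclideanLin_apply, Matrix.smul_mulVec, Matrix.one_mulVec]
  have hsq : ‖a‖ ^ 2 ≤ ‖a + c • w‖ ^ 2 := by
    rw [norm_add_sq_real]
    have h1 : 0 ≤ ⟪a, c • w⟫ := by
      rw [real_inner_smul_right]
      have := hApsd w
      rw [← ha] at this
      positivity
    nlinarith [norm_nonneg (c • w)]
  have hle : ‖a‖ ≤ ‖hstar‖ := by
    rw [← hMw, hMweq]
    nlinarith [norm_nonneg a, norm_nonneg (a + c • w)]
  have hlam' : lam < lam' := lt_of_le_of_lt (le_max_left _ _) hlt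
  calc L * ‖Matrix.toEuclideanLin M⁻¹ g‖ = L * ‖a‖ := by rw [hu, norm_neg]
  _ ≤ L * ‖hstar‖ := by nlinarith
  _ = 2 * lam := by rw [hnorm]; field_simp
  _ < 2 * lam' := by linarith
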